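/- arXiv:1010.3127 — 3 statements merged into one kernel-verified Lean document; each statement's English description precedes it below -/
import Mathlib

section
/- Let C be a groupoid and N a normal subgroupoid of C. Then there exist a groupoid D and a functor π : C ⥤ D such that: (i) π is surjective on objects; (ii) π is full (surjective on hom-sets); (iii) for all objects c, d of C, π.obj c = π.obj d if and only if N.arrows c d is nonempty; and (iv) for all objects c, d of C and all arrows g, h : c ⟶ d, π.map g = π.map h if and only if there exist n₁ ∈ N.arrows c c and n₂ ∈ N.arrows d d with h = n₁ ≫ g ≫ n₂. (This is the quotient groupoid G/∼ over P/∼₀ determined by the normal subgroupoid N.) -/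
open CategoryTheory

universe u v

/-!
First divide each hom-set by the relation `g ~ n₁ ≫ g ≫ n₂` with `n₁, n₂` loops of `N`; normality
makes it a congruence, so the quotient category by it identifies exactly these arrows and no
objects. Then collapse each class of `N`-connected objects to a chosen representative, moving
arrows to the representatives by conjugating with chosen arrows of `N`: this step is fully
faithful, so it identifies no further arrows, and it is surjective on objects.
-/

namespace CategoryTheory

instance {D : Type*} [Category D] : (AsSmall.up : D ⥤ AsSmall D).Full :=
  AsSmall.equiv.full_functor

instance {D : Type*} [Category D] : (AsSmall.up : D ⥤ AsSmall D).Faithful :=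
  AsSmall.equiv.faithful_functor

noncomputable instance AsSmall.groupoid {D : Type*} [Groupoid D] : Groupoid (AsSmall D) :=
  Groupoid.ofFullyFaithfulToGroupoid AsSmall.down AsSmall.equiv.fullyFaithfulInverse

section TransportToRepresentatives

variable {C : Type*} [Category C] {T : Type*} {rep : T → C} {cls : C → T}

abbrev transportToInduced (σ : ∀ c, rep (cls c) ≅ c) : C ⥤ InducedCategory C rep where
  obj := cls
  map {c d} f := InducedCategory.homMk ((σ c).hom ≫ f ≫ (σ d).inv)

def fullyFaithfulTransportToInduced (σ : ∀ c, rep (cls c) ≅ c) :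
    (transportToInduced σ).FullyFaithful where
  preimage {c d} f := (σ c).inv ≫ f.hom ≫ (σ d).hom
  map_preimage f := by ext; simp
  preimage_map f := by simp

instance (σ : ∀ c, rep (cls c) ≅ c) : (transportToInduced σ).Full :=
  (fullyFaithfulTransportToInduced σ).full

instance (σ : ∀ c, rep (cls c) ≅ c) : (transportToInduced σ).Faithful :=
  (fullyFaithfulTransportToInduced σ).faithful

end TransportToRepresentatives

namespace Subgroupoid

variable {C : Type u} [Groupoid.{v} C] (N : Subgroupoid C)

def DoubleCosetRel : HomRel C := fun c d g h =>
  ∃ n₁ ∈ N.arrows c c, ∃ n₂ ∈ N.arrows d d, h = n₁ ≫ g ≫ n₂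

variable {N}

theorem equivalence_doubleCosetRel (hN : N.IsWide) {c d : C} :
    _root_.Equivalence fun g h : c ⟶ d => N.DoubleCosetRel g h where
  refl g := ⟨𝟙 c, hN.wide c, 𝟙 d, hN.wide d, by simp⟩
  symm := by
    rintro g h ⟨n₁, hn₁, n₂, hn₂, rfl⟩
    exact ⟨Groupoid.inv n₁, N.inv hn₁, Groupoid.inv n₂, N.inv hn₂, by simp⟩
  trans := by
    rintro g h k ⟨n₁, hn₁, n₂, hn₂, rfl⟩ ⟨m₁, hm₁, m₂, hm₂, rfl⟩
    exact ⟨m₁ ≫ n₁, N.mul hm₁ hn₁, n₂ ≫ m₂, N.mul hn₂ hm₂, by simp⟩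

theorem congruence_doubleCosetRel (hN : N.IsNormal) : Congruence N.DoubleCosetRel where
  equivalence := equivalence_doubleCosetRel hN.toIsWide
  comp_left := by
    rintro _ _ _ f _ _ ⟨n₁, hn₁, n₂, hn₂, rfl⟩
    exact ⟨f ≫ n₁ ≫ Groupoid.inv f, hN.conj' f hn₁, n₂, hn₂, by simp⟩
  comp_right := by
    rintro _ _ _ _ _ g ⟨n₁, hn₁, n₂, hn₂, rfl⟩
    exact ⟨n₁, hn₁, Groupoid.inv g ≫ n₂ ≫ g, hN.conj g hn₂, by simp⟩

variable (N)

def componentSetoid (hN : N.IsWide) : Setoid C where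
  r c d := (N.arrows c d).Nonempty
  iseqv.refl c := ⟨𝟙 c, hN.wide c⟩
  iseqv.symm := fun ⟨n, hn⟩ => ⟨Groupoid.inv n, N.inv hn⟩
  iseqv.trans := fun ⟨m, hm⟩ ⟨n, hn⟩ => ⟨m ≫ n, N.mul hm hn⟩

variable (hN : N.IsWide)

abbrev Components : Type u := _root_.Quotient (N.componentSetoid hN)

noncomputable def outArrow (c : C) : (⟦c⟧ : N.Components hN).out ⟶ c :=
  (Quotient.mk_out (s := N.componentSetoid hN) c).choose

noncomputable abbrev quotientRep (t : N.Components hN) : Quotient N.DoubleCosetRel := ⟨t.out⟩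

-- `AsSmall` only lifts objects and arrows to the universe `max u v` demanded by the theorem.
abbrev QuotientGroupoid : Type (max u v) :=
  AsSmall.{max u v} (InducedCategory (Quotient N.DoubleCosetRel) (N.quotientRep hN))

noncomputable def quotientFunctor : C ⥤ N.QuotientGroupoid hN :=
  Quotient.functor _ ⋙
    transportToInduced (rep := N.quotientRep hN) (cls := fun q => ⟦q.as⟧)
      (fun q => asIso ((Quotient.functor _).map (N.outArrow hN q.as))) ⋙
    AsSmall.up

theorem quotientFunctor_obj (c : C) : (N.quotientFunctor hN).obj c = ⟨⟦c⟧⟩ := rfl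

theorem quotientFunctor_obj_surjective : Function.Surjective (N.quotientFunctor hN).obj :=
  fun ⟨t⟩ => ⟨t.out, by rw [quotientFunctor_obj, Quotient.out_eq]⟩

theorem quotientFunctor_obj_eq_iff (c d : C) :
    (N.quotientFunctor hN).obj c = (N.quotientFunctor hN).obj d ↔ (N.arrows c d).Nonempty :=
  ULift.up_inj.trans Quotient.eq

instance : (N.quotientFunctor hN).Full := by
  unfold quotientFunctor; infer_instance

theorem quotientFunctor_map_eq_iff (hN : N.IsNormal) {c d : C} (g h : c ⟶ d) :
    (N.quotientFunctor hN.toIsWide).map g = (N.quotientFunctor hN.toIsWide).map h ↔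
      N.DoubleCosetRel g h := by
  have := N.congruence_doubleCosetRel hN
  unfold quotientFunctor
  rw [Functor.comp_map, Functor.comp_map]
  exact (Functor.map_injective _).eq_iff.trans <| (Functor.map_injective _).eq_iff.trans <|
    Quotient.functor_map_eq_iff _ g h

end Subgroupoid

end CategoryTheory

/-- Quotient of a groupoid by a normal subgroupoid: there is a groupoid `D` and a functor
`π : C ⥤ D`, surjective on objects and on hom-sets, identifying two objects iff they are
joined by an arrow of `N`, and identifying two parallel arrows `g, h` iff
`h = n₁ ≫ g ≫ n₂` for loops `n₁, n₂` of `N`. -/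
theorem stmt_3 {C : Type u} [Groupoid.{v} C] (N : Subgroupoid C) (hN : N.IsNormal) :
    ∃ (D : Type (max u v)) (_ : Groupoid.{max u v} D) (π : C ⥤ D),
      Function.Surjective π.obj ∧
      (∀ c d : C, Function.Surjective fun g : c ⟶ d => π.map g) ∧
      (∀ c d : C, π.obj c = π.obj d ↔ (N.arrows c d).Nonempty) ∧
      (∀ (c d : C) (g h : c ⟶ d), π.map g = π.map h ↔
        ∃ n₁ ∈ N.arrows c c, ∃ n₂ ∈ N.arrows d d, h = n₁ ≫ g ≫ n₂) :=
  ⟨N.QuotientGroupoid hN.toIsWide, inferInstance, N.quotientFunctor hN.toIsWide,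
    N.quotientFunctor_obj_surjective _, fun _ _ => (N.quotientFunctor _).map_surjective,
    N.quotientFunctor_obj_eq_iff _, fun _ _ => N.quotientFunctor_map_eq_iff hN⟩
end

section
/- Let G be a C^∞ Lie group modelled on I : ModelWithCorners ℝ E H and let S : G → Submodule ℝ E be a multiplicative distribution on G. Then S is left invariant: for every g : G, S g = Submodule.map (mfderiv I I (fun x => g * x) 1) (S 1), i.e. S(g) is the image of S(1) under the tangent map at the identity of the left translation by g. -/
/-!
Differentiating the multiplication at `(g, h)` in the direction `(0, w)` gives the tangent of
the left translation by `g` at `h`, so taking `v = 0` in the multiplicativity condition shows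
that this tangent map sends `S h` into `S (g * h)`. With `h = 1` this is one inclusion; the
other is the case `(g⁻¹, g)`, since by the chain rule the tangent map of `g * ·` at `1` undoes
that of `g⁻¹ * ·` at `g`.
-/

open Manifold

section

variable {𝕜 : Type*} [NontriviallyNormedField 𝕜]
  {E : Type*} [NormedAddCommGroup E] [NormedSpace 𝕜 E]
  {H : Type*} [TopologicalSpace H] (I : ModelWithCorners 𝕜 E H)
  {G : Type*} [TopologicalSpace G] [ChartedSpace H G] {n : WithTop ℕ∞}

theorem mfderiv_mul_left_apply_eq_mfderiv_mul_apply [Monoid G] [ContMDiffMul I n G]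
    (hn : n ≠ 0) (g h : G) (w : E) :
    mfderiv I I (fun x : G => g * x) h w =
      mfderiv (I.prod I) I (fun p : G × G => p.1 * p.2) (g, h)
        ((0, w) : TangentSpace (I.prod I) (g, h)) := by
  have hsplit := mfderiv_prod_eq_add_apply (p := (g, h))
    (v := ((0, w) : TangentSpace (I.prod I) (g, h))) ((contMDiff_mul I n).mdifferentiableAt hn)
  rw [hsplit]
  exact (zero_add _).symm.trans (congrArg (· + _) (map_zero (mfderiv I I (· * h) g)).symm)

theorem mfderiv_mul_left_one_mfderiv_inv_mul_left_apply [Group G] [ContMDiffMul I n G]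
    (hn : n ≠ 0) (g : G) (w : E) :
    mfderiv I I (fun x : G => g * x) 1 (mfderiv I I (fun x : G => g⁻¹ * x) g w) = w := by
  have hid : ((fun x : G => g * x) ∘ fun x : G => g⁻¹ * x) = id :=
    funext (mul_inv_cancel_left g)
  refine (mfderiv_comp_apply_of_eq g (contMDiff_mul_left.mdifferentiableAt hn)
    (contMDiff_mul_left.mdifferentiableAt hn) (inv_mul_cancel g) w).symm.trans ?_
  rw [hid, mfderiv_id]
  rfl

def IsMultiplicativeDistribution [Mul G] (S : G → Submodule 𝕜 E) : Prop :=
  ∀ (g h : G) (v w : E), v ∈ S g → w ∈ S h →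
    mfderiv (I.prod I) I (fun p : G × G => p.1 * p.2) (g, h)
      ((v, w) : TangentSpace (I.prod I) (g, h)) ∈ S (g * h)

namespace IsMultiplicativeDistribution

variable {I}

theorem mfderiv_mul_left_mem [Monoid G] [ContMDiffMul I n G] {S : G → Submodule 𝕜 E}
    (hS : IsMultiplicativeDistribution I S) (hn : n ≠ 0) (g : G) {h : G} {w : E} (hw : w ∈ S h) :
    mfderiv I I (fun x : G => g * x) h w ∈ S (g * h) := by
  rw [mfderiv_mul_left_apply_eq_mfderiv_mul_apply I hn]
  exact hS g h 0 w (zero_mem _) hw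

theorem eq_map_mfderiv_mul_left_one [Group G] [ContMDiffMul I n G] {S : G → Submodule 𝕜 E}
    (hS : IsMultiplicativeDistribution I S) (hn : n ≠ 0) (g : G) :
    S g = (S 1).map (mfderiv I I (fun x : G => g * x) 1).toLinearMap := by
  apply le_antisymm
  · intro w hw
    have hw' := hS.mfderiv_mul_left_mem hn g⁻¹ hw
    rw [inv_mul_cancel] at hw'
    exact ⟨_, hw', mfderiv_mul_left_one_mfderiv_inv_mul_left_apply I hn g w⟩
  · rintro _ ⟨w, hw, rfl⟩
    have hw' := hS.mfderiv_mul_left_mem hn g hw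
    rw [mul_one] at hw'
    exact hw'

end IsMultiplicativeDistribution

end

/-- A multiplicative distribution on a Lie group is left invariant: `S g` is the image
of `S 1` under the tangent map at the identity of the left translation by `g`. -/
theorem stmt_5 {E : Type*} [NormedAddCommGroup E] [NormedSpace ℝ E]
    {H : Type*} [TopologicalSpace H] (I : ModelWithCorners ℝ E H)
    {G : Type*} [TopologicalSpace G] [ChartedSpace H G] [Group G] [LieGroup I (⊤ : ℕ∞) G]
    (S : G → Submodule ℝ E)
    (hS : ∀ (g h : G) (v w : E), v ∈ S g → w ∈ S h →
      mfderiv (I.prod I) I (fun p : G × G => p.1 * p.2) (g, h)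
        ((v, w) : TangentSpace (I.prod I) (g, h)) ∈ S (g * h)) :
    ∀ g : G, S g = Submodule.map (mfderiv I I (fun x : G => g * x) 1).toLinearMap (S 1) :=
  IsMultiplicativeDistribution.eq_map_mfderiv_mul_left_one (I := I) hS
    (by simp : ((⊤ : ℕ∞) : WithTop ℕ∞) ≠ 0)
end

section
/- Let V and W be finite-dimensional real vector spaces, f : V → W a surjective linear map with dual map f* : W* → V*, and let D ⊆ V × V* be Lagrangian with respect to the symmetric pairing ⟨(v,α),(w,β)⟩ = α(w) + β(v). Then the forward image f(D) = {(f v, β) ∈ W × W* : (v, f* β) ∈ D for some v ∈ V} is Lagrangian in W × W* with respect to the corresponding pairing, i.e. f(D) equals its own orthogonal complement. (This is the pointwise linear-algebra content of the push-forward Dirac structure pr(D_G) used in the quotient construction.) -/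
set_option maxHeartbeats 2000000



/-- Auxiliary: a functional vanishing on the kernel of a map into a dual space
is realized by evaluation at a point (finite-dimensional target). -/
theorem aux_realize {M N : Type*} [AddCommGroup M] [Module ℝ M]
    [AddCommGroup N] [Module ℝ N] [FiniteDimensional ℝ N]
    (g : M →ₗ[ℝ] Module.Dual ℝ N) (ℓ : Module.Dual ℝ M)
    (hℓ : ∀ m, g m = 0 → ℓ m = 0) : ∃ n : N, ∀ m : M, g m n = ℓ m := by
  have hmem : ℓ ∈ (LinearMap.ker g).dualAnnihilator := by
    rw [Submodule.mem_dualAnnihilator]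
    intro m hm
    exact hℓ m hm
  rw [← LinearMap.range_dualMap_eq_dualAnnihilator_ker] at hmem
  obtain ⟨Ψ, hΨ⟩ := hmem
  obtain ⟨n, hn⟩ := (Module.evalEquiv ℝ N).surjective Ψ
  refine ⟨n, fun m => ?_⟩
  have := LinearMap.congr_fun hΨ m
  rw [← hn] at this
  simpa [Module.Dual.eval_apply] using this

/-- The forward image of a Lagrangian subspace (linear Dirac structure) under a
surjective linear map is again Lagrangian: if `D ⊆ V × V*` equals its orthogonal for
the pairing `⟨(v,α),(w,β)⟩ = α(w) + β(v)` and `f : V → W` is a surjective linear map,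
then `f(D) = {(f v, β) : (v, f* β) ∈ D}` equals its orthogonal in `W × W*`. -/
theorem stmt_12 {V W : Type*} [AddCommGroup V] [Module ℝ V] [FiniteDimensional ℝ V]
    [AddCommGroup W] [Module ℝ W] [FiniteDimensional ℝ W]
    (f : V →ₗ[ℝ] W) (hf : Function.Surjective f)
    (D : Submodule ℝ (V × Module.Dual ℝ V))
    (hD : ∀ p : V × Module.Dual ℝ V,
      p ∈ D ↔ ∀ q ∈ D, q.2 p.1 + p.2 q.1 = 0) :
    ∀ p : W × Module.Dual ℝ W,
      (∃ v : V, (v, f.dualMap p.2) ∈ D ∧ f v = p.1) ↔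
      (∀ q : W × Module.Dual ℝ W,
        (∃ v : V, (v, f.dualMap q.2) ∈ D ∧ f v = q.1) →
        q.2 p.1 + p.2 q.1 = 0) := by
  intro p
  constructor
  · rintro ⟨v, hvD, hfv⟩ q ⟨v', hv'D, hfv'⟩
    have := (hD _).mp hvD _ hv'D
    simp only [LinearMap.dualMap_apply'] at this
    simp only [LinearMap.comp_apply] at this
    rw [← hfv, ← hfv']
    simpa using this
  · intro h
    obtain ⟨w, β⟩ := p
    set α : Module.Dual ℝ V := f.dualMap β with hα
    obtain ⟨v₀, hv₀⟩ := hf w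
    set K := LinearMap.ker f with hK
    -- restriction map from D to the dual of K
    set g : D →ₗ[ℝ] Module.Dual ℝ K :=
      (K.subtype.dualMap) ∘ₗ (LinearMap.snd ℝ V (Module.Dual ℝ V)) ∘ₗ D.subtype with hg
    -- the functional ℓ on D
    set ℓ : Module.Dual ℝ D :=
      ((Module.Dual.eval ℝ V v₀) ∘ₗ LinearMap.snd ℝ V (Module.Dual ℝ V)
        + α ∘ₗ LinearMap.fst ℝ V (Module.Dual ℝ V)) ∘ₗ D.subtype with hℓ
    have hℓ_apply : ∀ d : D, ℓ d = (d : V × Module.Dual ℝ V).2 v₀ + α (d : V × Module.Dual ℝ V).1 := by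
      intro d; rfl
    -- ℓ vanishes on ker g, so -ℓ is realized by evaluation at some k ∈ K
    have hvanish : ∀ d : D, g d = 0 → (-ℓ) d = 0 := by
      intro d hd
      have hker : (d : V × Module.Dual ℝ V).2 ∈ (LinearMap.ker f).dualAnnihilator := by
        rw [Submodule.mem_dualAnnihilator]
        intro x hx
        have := LinearMap.congr_fun hd ⟨x, hx⟩
        simpa [hg] using this
      rw [← LinearMap.range_dualMap_eq_dualAnnihilator_ker] at hker
      obtain ⟨β', hβ'⟩ := hker
      have hmem : ∃ v : V, (v, f.dualMap β') ∈ D ∧ f v = f (d : V × Module.Dual ℝ V).1 := by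
        refine ⟨(d : V × Module.Dual ℝ V).1, ?_, rfl⟩
        rw [hβ']
        exact d.2
      have := h (f (d : V × Module.Dual ℝ V).1, β') hmem
      simp only [LinearMap.neg_apply, hℓ_apply, neg_eq_zero]
      have hβv₀ : (d : V × Module.Dual ℝ V).2 v₀ = β' w := by
        rw [← hβ', LinearMap.dualMap_apply', LinearMap.comp_apply, hv₀]
      rw [hβv₀, hα, LinearMap.dualMap_apply', LinearMap.comp_apply]
      simpa using this
    obtain ⟨k, hkd'⟩ := aux_realize (M := D) (N := K) g (-ℓ) hvanish
    have hkd : ∀ d : D, (d : V × Module.Dual ℝ V).2 (k : V) = -(ℓ d) := by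
      intro d
      have := hkd' d
      simpa [hg] using this
    refine ⟨v₀ + (k : V), ?_, ?_⟩
    · rw [hD]
      intro q hq
      have := hkd ⟨q, hq⟩
      simp only [hℓ_apply] at this
      simp only [map_add]
      change q.2 v₀ + q.2 (k : V) + α q.1 = 0
      rw [this]
      ring
    · rw [map_add, hv₀, LinearMap.map_coe_ker, add_zero]
end
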